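/- arXiv:2212.00373 — 5 statements merged into one kernel-verified Lean document; each statement's English description precedes it below -/
import Mathlib

section
/- Let r be a SOIRE over a finite alphabet Σ and s a string over Σ. If r = r₁·r₂ or r = r₁&r₂ or r = r₁|r₂, then for each i ∈ {1, 2}: rᵢ matches filter(s, α(r)) if and only if filter(s, α(rᵢ)) = filter(s, α(r)) and rᵢ matches filter(s, α(rᵢ)). -/
/-- Regular expressions with interleaving, RE(&). -/
inductive RE (α : Type) : Type where
  | sym : α → RE α
  | opt : RE α → RE α
  | star : RE α → RE α
  | plus : RE α → RE α
  | cat : RE α → RE α → RE α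
  | inter : RE α → RE α → RE α
  | alt : RE α → RE α → RE α

/-- `Shuffle s₁ s₂ s` : `s` is a shuffle (interleaving) of `s₁` and `s₂`. -/
inductive Shuffle {α : Type} : List α → List α → List α → Prop where
  | nil : Shuffle [] [] []
  | left {a : α} {s₁ s₂ s : List α} : Shuffle s₁ s₂ s → Shuffle (a :: s₁) s₂ (a :: s)
  | right {a : α} {s₁ s₂ s : List α} : Shuffle s₁ s₂ s → Shuffle s₁ (a :: s₂) (a :: s)

/-- The matching relation `r ⊨ s`. -/
inductive Matches {α : Type} : RE α → List α → Prop where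
  | sym (a : α) : Matches (RE.sym a) [a]
  | optEps (r : RE α) : Matches (RE.opt r) []
  | opt {r : RE α} {s : List α} : Matches r s → Matches (RE.opt r) s
  | starEps (r : RE α) : Matches (RE.star r) []
  | starStep {r : RE α} {s₁ s₂ : List α} : s₂ ≠ [] → Matches (RE.star r) s₁ →
      Matches r s₂ → Matches (RE.star r) (s₁ ++ s₂)
  | plus {r : RE α} {s₁ s₂ : List α} : Matches (RE.star r) s₁ → Matches r s₂ →
      Matches (RE.plus r) (s₁ ++ s₂)
  | cat {r₁ r₂ : RE α} {s₁ s₂ : List α} : Matches r₁ s₁ → Matches r₂ s₂ →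
      Matches (RE.cat r₁ r₂) (s₁ ++ s₂)
  | inter {r₁ r₂ : RE α} {s₁ s₂ s : List α} : Shuffle s₁ s₂ s → Matches r₁ s₁ →
      Matches r₂ s₂ → Matches (RE.inter r₁ r₂) s
  | altLeft {r₁ r₂ : RE α} {s : List α} : Matches r₁ s → Matches (RE.alt r₁ r₂) s
  | altRight {r₁ r₂ : RE α} {s : List α} : Matches r₂ s → Matches (RE.alt r₁ r₂) s

/-- The list of symbol occurrences of a RE(&). -/
def RE.symList {α : Type} : RE α → List α
  | .sym a => [a]
  | .opt r => r.symList
  | .star r => r.symList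
  | .plus r => r.symList
  | .cat r₁ r₂ => r₁.symList ++ r₂.symList
  | .inter r₁ r₂ => r₁.symList ++ r₂.symList
  | .alt r₁ r₂ => r₁.symList ++ r₂.symList

/-- A SOIRE is a RE(&) in which every symbol occurs at most once. -/
def SOIRE {α : Type} (r : RE α) : Prop := r.symList.Nodup

/-- `α(r)` : the set of symbols occurring in `r`. -/
def RE.alpha {α : Type} [DecidableEq α] : RE α → Finset α
  | .sym a => {a}
  | .opt r => r.alpha
  | .star r => r.alpha
  | .plus r => r.alpha
  | .cat r₁ r₂ => r₁.alpha ∪ r₂.alpha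
  | .inter r₁ r₂ => r₁.alpha ∪ r₂.alpha
  | .alt r₁ r₂ => r₁.alpha ∪ r₂.alpha

/-- `filter(s, V)` : the subsequence of `s` of entries lying in `V`. -/
def filt {α : Type} [DecidableEq α] (s : List α) (V : Finset α) : List α :=
  s.filter (fun a => decide (a ∈ V))

lemma shuffle_mem {α : Type} {s₁ s₂ s : List α} (h : Shuffle s₁ s₂ s) :
    ∀ a ∈ s, a ∈ s₁ ∨ a ∈ s₂ := by
  induction h with
  | nil => simp
  | left _ ih =>
    intro a ha
    rcases List.mem_cons.mp ha with h | h
    · exact Or.inl (by simp [h])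
    · rcases ih a h with h | h
      · exact Or.inl (List.mem_cons_of_mem _ h)
      · exact Or.inr h
  | right _ ih =>
    intro a ha
    rcases List.mem_cons.mp ha with h | h
    · exact Or.inr (by simp [h])
    · rcases ih a h with h | h
      · exact Or.inl h
      · exact Or.inr (List.mem_cons_of_mem _ h)

lemma matches_mem_alpha {α : Type} [DecidableEq α] {r : RE α} {s : List α}
    (h : Matches r s) : ∀ a ∈ s, a ∈ r.alpha := by
  induction h with
  | sym b => simp [RE.alpha]
  | optEps => simp
  | opt _ ih => exact ih
  | starEps => simp
  | starStep _ _ _ ih₁ ih₂ =>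
    intro a ha
    rcases List.mem_append.mp ha with h | h
    · exact ih₁ a h
    · exact ih₂ a h
  | plus _ _ ih₁ ih₂ =>
    intro a ha
    rcases List.mem_append.mp ha with h | h
    · exact ih₁ a h
    · exact ih₂ a h
  | cat _ _ ih₁ ih₂ =>
    intro a ha
    rcases List.mem_append.mp ha with h | h
    · exact Finset.mem_union_left _ (ih₁ a h)
    · exact Finset.mem_union_right _ (ih₂ a h)
  | inter hsh _ _ ih₁ ih₂ =>
    intro a ha
    rcases shuffle_mem hsh a ha with h | h
    · exact Finset.mem_union_left _ (ih₁ a h)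
    · exact Finset.mem_union_right _ (ih₂ a h)
  | altLeft _ ih => intro a ha; exact Finset.mem_union_left _ (ih a ha)
  | altRight _ ih => intro a ha; exact Finset.mem_union_right _ (ih a ha)

lemma child_aux {α : Type} [DecidableEq α] (r' : RE α) (R : Finset α)
    (hsub : r'.alpha ⊆ R) (s : List α) :
    Matches r' (filt s R) ↔
      filt s r'.alpha = filt s R ∧ Matches r' (filt s r'.alpha) := by
  constructor
  · intro hm
    have hall := matches_mem_alpha hm
    have heq : filt s r'.alpha = filt s R := by
      have h1 : filt (filt s R) r'.alpha = filt s r'.alpha := by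
        simp only [filt, List.filter_filter]
        congr 1
        ext a
        by_cases h : a ∈ r'.alpha
        · simp [h, hsub h]
        · simp [h]
      have h2 : filt (filt s R) r'.alpha = filt s R := by
        unfold filt
        apply List.filter_eq_self.mpr
        intro a ha
        simpa using hall a ha
      rw [← h1, h2]
    exact ⟨heq, heq ▸ hm⟩
  · rintro ⟨heq, hm⟩
    exact heq ▸ hm

/-- Lemma 1: for `r = r₁·r₂`, `r = r₁&r₂` or `r = r₁|r₂`, each `rᵢ`
matches `filter(s, α(r))` iff `filter(s, α(rᵢ)) = filter(s, α(r))` and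
`rᵢ` matches `filter(s, α(rᵢ))`. -/
theorem soire_child_filter_match {α : Type} [DecidableEq α] (r r₁ r₂ : RE α)
    (hform : r = RE.cat r₁ r₂ ∨ r = RE.inter r₁ r₂ ∨ r = RE.alt r₁ r₂)
    (hr : SOIRE r) (s : List α) :
    (Matches r₁ (filt s r.alpha) ↔
      filt s r₁.alpha = filt s r.alpha ∧ Matches r₁ (filt s r₁.alpha)) ∧
    (Matches r₂ (filt s r.alpha) ↔
      filt s r₂.alpha = filt s r.alpha ∧ Matches r₂ (filt s r₂.alpha)) := by
  have halpha : r.alpha = r₁.alpha ∪ r₂.alpha := by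
    rcases hform with h | h | h <;> subst h <;> rfl
  constructor
  · rw [halpha]; exact child_aux r₁ _ Finset.subset_union_left s
  · rw [halpha]; exact child_aux r₂ _ Finset.subset_union_right s
end

section
/- Let r = r₁&r₂ be a SOIRE over a finite alphabet Σ (so in particular α(r₁) ∩ α(r₂) = ∅) and let s be any string over Σ. Then r₁&r₂ matches filter(s, α(r₁&r₂)) if and only if r₁ matches filter(s, α(r₁)) and r₂ matches filter(s, α(r₂)). -/
namespace Shuffle

variable {α : Type} {s₁ s₂ s : List α}

theorem symm (h : Shuffle s₁ s₂ s) : Shuffle s₂ s₁ s := by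
  induction h with
  | nil => exact nil
  | left _ ih => exact right ih
  | right _ ih => exact left ih

theorem mem_iff (h : Shuffle s₁ s₂ s) {a : α} : a ∈ s ↔ a ∈ s₁ ∨ a ∈ s₂ := by
  induction h with
  | nil => simp
  | left _ ih => simp [ih, or_assoc]
  | right _ ih => simp only [List.mem_cons, ih]; tauto

theorem filter_eq_left (h : Shuffle s₁ s₂ s) {p : α → Bool} (h₁ : ∀ a ∈ s₁, p a)
    (h₂ : ∀ a ∈ s₂, p a = false) : s.filter p = s₁ := by
  induction h with
  | nil => rfl
  | left _ ih =>
    rw [List.filter_cons_of_pos (h₁ _ List.mem_cons_self),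
      ih (fun b hb => h₁ b (List.mem_cons_of_mem _ hb)) h₂]
  | right _ ih =>
    rw [List.filter_cons_of_neg (by simp [h₂ _ List.mem_cons_self]),
      ih h₁ (fun b hb => h₂ b (List.mem_cons_of_mem _ hb))]

variable [DecidableEq α] {V₁ V₂ : Finset α}

theorem filt_eq_left (h : Shuffle s₁ s₂ s) (hV : Disjoint V₁ V₂) (h₁ : ∀ a ∈ s₁, a ∈ V₁)
    (h₂ : ∀ a ∈ s₂, a ∈ V₂) : filt s V₁ = s₁ :=
  h.filter_eq_left (by simpa using h₁)
    (by simpa using fun a ha => Finset.disjoint_right.1 hV (h₂ a ha))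

theorem filt_eq_right (h : Shuffle s₁ s₂ s) (hV : Disjoint V₁ V₂) (h₁ : ∀ a ∈ s₁, a ∈ V₁)
    (h₂ : ∀ a ∈ s₂, a ∈ V₂) : filt s V₂ = s₂ :=
  h.symm.filt_eq_left hV.symm h₂ h₁

end Shuffle

section Filt

variable {α : Type} [DecidableEq α]

theorem filt_filt_of_subset (s : List α) {U V : Finset α} (hVU : V ⊆ U) :
    filt (filt s U) V = filt s V := by
  simp only [filt, List.filter_filter]
  refine List.filter_congr fun a _ => ?_
  by_cases ha : a ∈ V
  · simp [ha, hVU ha]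
  · simp [ha]

theorem shuffle_filt_union (s : List α) {V₁ V₂ : Finset α} (hV : Disjoint V₁ V₂) :
    Shuffle (filt s V₁) (filt s V₂) (filt s (V₁ ∪ V₂)) := by
  induction s with
  | nil => exact Shuffle.nil
  | cons a t ih =>
    by_cases h₁ : a ∈ V₁
    · have h₂ : a ∉ V₂ := Finset.disjoint_left.1 hV h₁
      simpa [filt, List.filter_cons, h₁, h₂] using Shuffle.left ih
    · by_cases h₂ : a ∈ V₂
      · simpa [filt, List.filter_cons, h₁, h₂] using Shuffle.right ih
      · simpa [filt, List.filter_cons, h₁, h₂] using ih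

end Filt

section Alphabet

variable {α : Type} [DecidableEq α]

theorem RE.alpha_eq_toFinset (r : RE α) : r.alpha = r.symList.toFinset := by
  induction r <;> simp [RE.alpha, RE.symList, *]

theorem SOIRE.disjoint_alpha_of_inter {r₁ r₂ : RE α} (hr : SOIRE (RE.inter r₁ r₂)) :
    Disjoint r₁.alpha r₂.alpha := by
  rw [RE.alpha_eq_toFinset, RE.alpha_eq_toFinset, List.disjoint_toFinset_iff_disjoint]
  exact List.disjoint_iff_ne.2 (List.nodup_append.1 hr).2.2

theorem Matches.mem_alpha {r : RE α} {s : List α} (h : Matches r s) : ∀ a ∈ s, a ∈ r.alpha := by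
  induction h with
  | sym a => simp [RE.alpha]
  | optEps | starEps => simp
  | opt _ ih => exact ih
  | starStep _ _ _ ih₁ ih₂ | plus _ _ ih₁ ih₂ =>
    intro a ha
    rcases List.mem_append.1 ha with h | h
    exacts [ih₁ a h, ih₂ a h]
  | cat _ _ ih₁ ih₂ =>
    intro a ha
    rcases List.mem_append.1 ha with h | h
    · exact Finset.mem_union_left _ (ih₁ a h)
    · exact Finset.mem_union_right _ (ih₂ a h)
  | inter hsh _ _ ih₁ ih₂ =>
    intro a ha
    rcases hsh.mem_iff.1 ha with h | h
    · exact Finset.mem_union_left _ (ih₁ a h)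
    · exact Finset.mem_union_right _ (ih₂ a h)
  | altLeft _ ih => exact fun a ha => Finset.mem_union_left _ (ih a ha)
  | altRight _ ih => exact fun a ha => Finset.mem_union_right _ (ih a ha)

end Alphabet

/-- for a SOIRE `r₁&r₂`, `r₁&r₂ ⊨ filter(s, α(r₁&r₂))` iff
`r₁ ⊨ filter(s, α(r₁))` and `r₂ ⊨ filter(s, α(r₂))`. -/
theorem soire_inter_filter_match {α : Type} [DecidableEq α] (r₁ r₂ : RE α)
    (hr : SOIRE (RE.inter r₁ r₂)) (s : List α) :
    Matches (RE.inter r₁ r₂) (filt s (RE.inter r₁ r₂).alpha) ↔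
      Matches r₁ (filt s r₁.alpha) ∧ Matches r₂ (filt s r₂.alpha) := by
  have hd := hr.disjoint_alpha_of_inter
  simp only [RE.alpha]
  constructor
  · intro h
    cases h with | inter hsh hm₁ hm₂ => ?_
    have hU₁ : r₁.alpha ⊆ r₁.alpha ∪ r₂.alpha := Finset.subset_union_left
    have hU₂ : r₂.alpha ⊆ r₁.alpha ∪ r₂.alpha := Finset.subset_union_right
    rw [← filt_filt_of_subset s hU₁, ← filt_filt_of_subset s hU₂,
      hsh.filt_eq_left hd hm₁.mem_alpha hm₂.mem_alpha,
      hsh.filt_eq_right hd hm₁.mem_alpha hm₂.mem_alpha]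
    exact ⟨hm₁, hm₂⟩
  · rintro ⟨hm₁, hm₂⟩
    exact Matches.inter (shuffle_filt_union s hd) hm₁ hm₂
end

section
/- For every SOIRE r over a finite alphabet Σ there exists a SOIRE r' over Σ such that |r'| ≤ 4·|Σ| − 2 and L(r') = L(r), i.e., r' matches exactly the same strings as r. -/
/-- Tokens of the prefix notation: symbols and the six operators. -/
inductive Tok (α : Type) : Type where
  | sym : α → Tok α
  | opt : Tok α
  | star : Tok α
  | plus : Tok α
  | cat : Tok α
  | inter : Tok α
  | alt : Tok α

/-- `PreForm(r)` : the prefix notation of `r` (preorder traversal of its syntax tree). -/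
def RE.preForm {α : Type} : RE α → List (Tok α)
  | .sym a => [Tok.sym a]
  | .opt r => Tok.opt :: r.preForm
  | .star r => Tok.star :: r.preForm
  | .plus r => Tok.plus :: r.preForm
  | .cat r₁ r₂ => Tok.cat :: (r₁.preForm ++ r₂.preForm)
  | .inter r₁ r₂ => Tok.inter :: (r₁.preForm ++ r₂.preForm)
  | .alt r₁ r₂ => Tok.alt :: (r₁.preForm ++ r₂.preForm)

/-- The size `|r|` of a RE(&): the length of its prefix notation. -/
def RE.size {α : Type} (r : RE α) : ℕ := r.preForm.length

/-- Whether a token is a symbol of the alphabet. -/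
def Tok.isSym {α : Type} : Tok α → Bool
  | .sym _ => true
  | _ => false

/-- Whether a token is a binary operator (`·`, `&` or `|`). -/
def Tok.isBin {α : Type} : Tok α → Bool
  | .cat => true
  | .inter => true
  | .alt => true
  | _ => false

/-- `𝟙[o ∈ Σ] − 𝟙[o ∈ {·, &, |}]` for a token `o`. -/
def Tok.val {α : Type} (o : Tok α) : ℤ :=
  (if o.isSym then 1 else 0) - (if o.isBin then 1 else 0)

/-!
Stacked unary operators collapse: by the Kleene algebra identities `(1 + a)∗ = a∗`,
`(a∗ * a)∗ = a∗` and their relatives, any nonempty stack of `?`, `*` and `+` over a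
subexpression denotes the same language as a single one of them. After collapsing, an
expression with `n` symbol occurrences has `n - 1` binary nodes, and each of its `2n - 1`
symbol or binary nodes carries at most one unary operator, so its size is at most `4n - 2`;
in a SOIRE, `n ≤ |Σ|`.
-/

open Computability

section KleeneAlgebra

variable {K : Type*} [KleeneAlgebra K] (a : K)

theorem kstar_mul_one_add : a∗ * (1 + a) = a∗ := by
  rw [mul_add, mul_one, add_eq_left_iff_le]
  exact kstar_mul_le_kstar

theorem kstar_one_add : (1 + a)∗ = a∗ :=
  le_antisymm (kstar_le_of_mul_le_left one_le_kstar (kstar_mul_one_add a).le)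
    (kstar_mono le_add_self)

theorem kstar_one_add_mul_one_add : (1 + a)∗ * (1 + a) = a∗ := by
  rw [kstar_one_add, kstar_mul_one_add]

theorem kstar_mul_kstar_mul_self : a∗ * (a∗ * a) = a∗ * a := by
  rw [← mul_assoc, kstar_mul_kstar]

theorem kstar_kstar_mul_self : (a∗ * a)∗ = a∗ := by
  refine le_antisymm (kstar_le_of_mul_le_left one_le_kstar ?_) ?_
  · rw [kstar_mul_kstar_mul_self]
    exact kstar_mul_le_kstar
  · calc a∗ = 1 + a∗ * a := one_add_kstar_mul.symm
      _ ≤ (a∗ * a)∗ := add_le one_le_kstar le_kstar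

end KleeneAlgebra

def Language.shuffle {α : Type} (l m : Language α) : Language α :=
  {s | ∃ s₁ ∈ l, ∃ s₂ ∈ m, Shuffle s₁ s₂ s}

namespace RE

variable {α : Type}

def lang : RE α → Language α
  | .sym a => {[a]}
  | .opt r => 1 + r.lang
  | .star r => r.lang∗
  | .plus r => r.lang∗ * r.lang
  | .cat r₁ r₂ => r₁.lang * r₂.lang
  | .inter r₁ r₂ => r₁.lang.shuffle r₂.lang
  | .alt r₁ r₂ => r₁.lang + r₂.lang

theorem mem_lang_of_matches {r : RE α} {s : List α} (h : Matches r s) : s ∈ r.lang := by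
  induction h with
  | sym a => rfl
  | optEps r => exact Or.inl rfl
  | opt _ ih => exact Or.inr ih
  | starEps r => exact Language.nil_mem_kstar _
  | @starStep r _ _ _ _ _ ih₁ ih₂ =>
    exact (kstar_mul_le_kstar : r.lang∗ * r.lang ≤ _) (Language.append_mem_mul ih₁ ih₂)
  | plus _ _ ih₁ ih₂ => exact Language.append_mem_mul ih₁ ih₂
  | cat _ _ ih₁ ih₂ => exact Language.append_mem_mul ih₁ ih₂
  | inter hs _ _ ih₁ ih₂ => exact ⟨_, ih₁, _, ih₂, hs⟩
  | altLeft _ ih => exact Or.inl ih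
  | altRight _ ih => exact Or.inr ih

theorem matches_star_flatten {r : RE α} {L : List (List α)} (h : ∀ y ∈ L, Matches r y) :
    Matches r.star L.flatten := by
  induction L using List.reverseRecOn with
  | nil => exact Matches.starEps r
  | append_singleton L y ih =>
    have hL := ih fun x hx => h x (List.mem_append_left _ hx)
    rw [List.flatten_append, List.flatten_singleton]
    rcases eq_or_ne y [] with rfl | hy
    · simpa using hL
    · exact Matches.starStep hy hL (h y (by simp))

theorem matches_star_of_mem_kstar {r : RE α} (hlang : ∀ {s}, s ∈ r.lang → Matches r s)
    {s : List α} (h : s ∈ r.lang∗) : Matches r.star s := by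
  obtain ⟨L, rfl, hL⟩ := Language.mem_kstar.mp h
  exact matches_star_flatten fun y hy => hlang (hL y hy)

theorem matches_of_mem_lang {r : RE α} {s : List α} (h : s ∈ r.lang) : Matches r s := by
  induction r generalizing s with
  | sym a => rw [show s = [a] from h]; exact Matches.sym a
  | opt r ih =>
    rcases h with rfl | h
    · exact Matches.optEps r
    · exact Matches.opt (ih h)
  | star r ih => exact matches_star_of_mem_kstar ih h
  | plus r ih =>
    obtain ⟨s₁, h₁, s₂, h₂, rfl⟩ := Language.mem_mul.mp h
    exact Matches.plus (matches_star_of_mem_kstar ih h₁) (ih h₂)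
  | cat r₁ r₂ ih₁ ih₂ =>
    obtain ⟨s₁, h₁, s₂, h₂, rfl⟩ := Language.mem_mul.mp h
    exact Matches.cat (ih₁ h₁) (ih₂ h₂)
  | inter r₁ r₂ ih₁ ih₂ =>
    obtain ⟨s₁, h₁, s₂, h₂, hs⟩ := h
    exact Matches.inter hs (ih₁ h₁) (ih₂ h₂)
  | alt r₁ r₂ ih₁ ih₂ =>
    rcases h with h | h
    · exact Matches.altLeft (ih₁ h)
    · exact Matches.altRight (ih₂ h)

theorem matches_iff_mem_lang {r : RE α} {s : List α} : Matches r s ↔ s ∈ r.lang :=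
  ⟨mem_lang_of_matches, matches_of_mem_lang⟩

def mkOpt : RE α → RE α
  | .opt r => .opt r
  | .star r => .star r
  | .plus r => .star r
  | r => .opt r

def mkStar : RE α → RE α
  | .opt r => .star r
  | .star r => .star r
  | .plus r => .star r
  | r => .star r

def mkPlus : RE α → RE α
  | .opt r => .star r
  | .star r => .star r
  | .plus r => .plus r
  | r => .plus r

def collapse : RE α → RE α
  | .sym a => .sym a
  | .opt r => mkOpt r.collapse
  | .star r => mkStar r.collapse
  | .plus r => mkPlus r.collapse
  | .cat r₁ r₂ => .cat r₁.collapse r₂.collapse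
  | .inter r₁ r₂ => .inter r₁.collapse r₂.collapse
  | .alt r₁ r₂ => .alt r₁.collapse r₂.collapse

theorem lang_mkOpt (q : RE α) : (mkOpt q).lang = 1 + q.lang := by
  cases q <;> simp only [mkOpt, lang]
  · rw [← add_assoc, add_idem]
  · exact (add_eq_right_iff_le.mpr one_le_kstar).symm
  · rw [one_add_kstar_mul]

theorem lang_mkStar (q : RE α) : (mkStar q).lang = q.lang∗ := by
  cases q <;> simp only [mkStar, lang]
  · rw [kstar_one_add]
  · rw [kstar_idem]
  · rw [kstar_kstar_mul_self]

theorem lang_mkPlus (q : RE α) : (mkPlus q).lang = q.lang∗ * q.lang := by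
  cases q <;> simp only [mkPlus, lang]
  · rw [kstar_one_add_mul_one_add]
  · rw [kstar_idem, kstar_mul_kstar]
  · rw [kstar_kstar_mul_self, kstar_mul_kstar_mul_self]

theorem lang_collapse (r : RE α) : r.collapse.lang = r.lang := by
  induction r with
  | sym a => rfl
  | opt r ih => rw [collapse, lang_mkOpt, ih, lang]
  | star r ih => rw [collapse, lang_mkStar, ih, lang]
  | plus r ih => rw [collapse, lang_mkPlus, ih, lang]
  | cat r₁ r₂ ih₁ ih₂ => rw [collapse, lang, ih₁, ih₂, lang]
  | inter r₁ r₂ ih₁ ih₂ => rw [collapse, lang, ih₁, ih₂, lang]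
  | alt r₁ r₂ ih₁ ih₂ => rw [collapse, lang, ih₁, ih₂, lang]

theorem symList_mkOpt (q : RE α) : (mkOpt q).symList = q.symList := by
  cases q <;> rfl

theorem symList_mkStar (q : RE α) : (mkStar q).symList = q.symList := by
  cases q <;> rfl

theorem symList_mkPlus (q : RE α) : (mkPlus q).symList = q.symList := by
  cases q <;> rfl

theorem symList_collapse (r : RE α) : r.collapse.symList = r.symList := by
  induction r with
  | sym a => rfl
  | opt r ih => rw [collapse, symList_mkOpt, ih, symList]
  | star r ih => rw [collapse, symList_mkStar, ih, symList]
  | plus r ih => rw [collapse, symList_mkPlus, ih, symList]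
  | cat r₁ r₂ ih₁ ih₂ | inter r₁ r₂ ih₁ ih₂ | alt r₁ r₂ ih₁ ih₂ =>
    simp only [collapse, symList, ih₁, ih₂]

/-- Collapsed expressions satisfy `size + slack ≤ 4 * symList.length`; a non-unary top keeps
room for one unary operator above it. -/
def slack : RE α → ℕ
  | .opt _ | .star _ | .plus _ => 2
  | _ => 3

theorem two_le_slack (r : RE α) : 2 ≤ r.slack := by
  cases r <;> simp [slack]

theorem size_mkOpt_add_slack_le (q : RE α) :
    (mkOpt q).size + (mkOpt q).slack ≤ q.size + q.slack := by
  cases q <;> simp [mkOpt, slack, size, preForm]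

theorem size_mkStar_add_slack_le (q : RE α) :
    (mkStar q).size + (mkStar q).slack ≤ q.size + q.slack := by
  cases q <;> simp [mkStar, slack, size, preForm]

theorem size_mkPlus_add_slack_le (q : RE α) :
    (mkPlus q).size + (mkPlus q).slack ≤ q.size + q.slack := by
  cases q <;> simp [mkPlus, slack, size, preForm]

theorem size_collapse_add_slack_le (r : RE α) :
    r.collapse.size + r.collapse.slack ≤ 4 * r.symList.length := by
  induction r with
  | sym a => simp [collapse, slack, size, preForm, symList]
  | opt r ih => exact (size_mkOpt_add_slack_le _).trans ih
  | star r ih => exact (size_mkStar_add_slack_le _).trans ih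
  | plus r ih => exact (size_mkPlus_add_slack_le _).trans ih
  | cat r₁ r₂ ih₁ ih₂ | inter r₁ r₂ ih₁ ih₂ | alt r₁ r₂ ih₁ ih₂ =>
    have h₁ := two_le_slack r₁.collapse
    have h₂ := two_le_slack r₂.collapse
    simp only [collapse, slack, size, preForm, symList, List.length_cons, List.length_append] at *
    omega

end RE

theorem soire_equiv_bounded_size_general {α : Type} [Fintype α]
    (r : RE α) (hr : SOIRE r) :
    ∃ r' : RE α, SOIRE r' ∧ r'.size ≤ 4 * Fintype.card α - 2 ∧
      ∀ s : List α, Matches r' s ↔ Matches r s := by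
  refine ⟨r.collapse, ?_, ?_, fun s => ?_⟩
  · rw [SOIRE, r.symList_collapse]
    exact hr
  · have hsize := r.size_collapse_add_slack_le
    have hslack := r.collapse.two_le_slack
    have hcard := hr.length_le_card
    omega
  · rw [RE.matches_iff_mem_lang, RE.matches_iff_mem_lang, r.lang_collapse]

/-- every SOIRE is equivalent to a SOIRE of size at most `4·|Σ| − 2`. -/
theorem soire_equiv_bounded_size {α : Type} [Fintype α] [DecidableEq α]
    (r : RE α) (hr : SOIRE r) :
    ∃ r' : RE α, SOIRE r' ∧ r'.size ≤ 4 * Fintype.card α - 2 ∧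
      ∀ s : List α, Matches r' s ↔ Matches r s :=
  soire_equiv_bounded_size_general r hr
end

section
/- Let T ∈ ℤ⁺ and let r be any SOIRE over a finite alphabet Σ with |r| ≤ T. Then there exists a faithful encoding θ with length T such that Enc2Pre(θ) = PreForm(r). -/
/-- The set `B = Σ ∪ {?, *, +, ·, &, |, none}` indexing the entries of `wᵗ`. -/
inductive BSym (α : Type) : Type where
  | sym : α → BSym α
  | opt : BSym α
  | star : BSym α
  | plus : BSym α
  | cat : BSym α
  | inter : BSym α
  | alt : BSym α
  | none : BSym α

/-- Embedding of prefix-notation tokens into `B`. -/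
def Tok.toB {α : Type} : Tok α → BSym α
  | .sym a => .sym a
  | .opt => .opt
  | .star => .star
  | .plus => .plus
  | .cat => .cat
  | .inter => .inter
  | .alt => .alt

/-- An encoding `θ = (w, u)` with length `T`.  Vertex `t ∈ {1,…,T}` is represented by
the index `⟨t−1, _⟩ : Fin T`; `uᵗ_{t'}` vanishes unless `t + 2 ≤ t' ≤ T`. -/
structure Encoding (α : Type) (T : ℕ) : Type where
  w : Fin T → BSym α → ℝ
  u : Fin T → Fin T → ℝ
  w_mem : ∀ t a, w t a ∈ Set.Icc (0 : ℝ) 1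
  u_mem : ∀ t t', u t t' ∈ Set.Icc (0 : ℝ) 1
  u_zero : ∀ t t' : Fin T, t'.val < t.val + 2 → u t t' = 0

/-- A `[0,1]`-valued function is one-hot: value `1` at exactly one point, `0` elsewhere. -/
def OneHotFn {β : Type} (f : β → ℝ) : Prop :=
  ∃ b, f b = 1 ∧ ∀ b', b' ≠ b → f b' = 0

/-- Faithful encodings (Definition 3): conditions (1)–(7). -/
def Faithful {α : Type} [Fintype α] {T : ℕ} (θ : Encoding α T) : Prop :=
  -- (1) each `wᵗ` is one-hot
  (∀ t, OneHotFn (θ.w t)) ∧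
  -- (2) each `uᵗ` is one-hot or all-zero
  (∀ t, (∀ t', θ.u t t' = 0) ∨ OneHotFn (θ.u t)) ∧
  -- (3) `Σ_{t'} uᵗ_{t'} + Σ_{a ∈ Σ∪{?,*,+,none}} wᵗ_a = 1`
  (∀ t, (∑ t', θ.u t t') +
      ((∑ a : α, θ.w t (BSym.sym a)) + θ.w t BSym.opt + θ.w t BSym.star +
        θ.w t BSym.plus + θ.w t BSym.none) = 1) ∧
  -- (4) `w^{t+1}_none ≥ wᵗ_none`
  (∀ t t' : Fin T, t.val + 1 = t'.val → θ.w t BSym.none ≤ θ.w t' BSym.none) ∧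
  -- (5) `Σ_{a ∈ {?,+,*,·,&,|}} w^{t−1}_a + Σ_{t'=1}^{t−2} u^{t'}_t + wᵗ_none = 1`
  (∀ t t' : Fin T, t.val + 1 = t'.val →
      (θ.w t BSym.opt + θ.w t BSym.plus + θ.w t BSym.star +
        θ.w t BSym.cat + θ.w t BSym.inter + θ.w t BSym.alt) +
      (∑ p, θ.u p t') + θ.w t' BSym.none = 1) ∧
  -- (6) `(t−1−p)·uᵖ_t + Σ_{p'=p+1}^{t−1} Σ_{t'=t+1}^{T} u^{p'}_{t'} ≤ t−1−p`
  (∀ t p : Fin T, p.val + 2 ≤ t.val →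
      ((t.val : ℝ) - p.val - 1) * θ.u p t +
        ∑ p' ∈ Finset.univ.filter (fun p' : Fin T => p.val < p'.val ∧ p'.val < t.val),
          ∑ t' ∈ Finset.univ.filter (fun t' : Fin T => t.val < t'.val), θ.u p' t'
        ≤ (t.val : ℝ) - p.val - 1) ∧
  -- (7) `Σ_t wᵗ_a ≤ 1` for each symbol `a`
  (∀ a : α, (∑ t, θ.w t (BSym.sym a)) ≤ 1)

/-- `Enc2Pre(θ) = os` : the decoded sequence of `θ` is `os`, i.e. position `t` of `θ`
carries (with weight `1`) the `t`-th token of `os` for `t ≤ |os|`, and the `none`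
operator beyond. -/
def DecodesTo {α : Type} {T : ℕ} (θ : Encoding α T) (os : List (Tok α)) : Prop :=
  os.length ≤ T ∧
  (∀ (t : Fin T) (h : t.val < os.length), θ.w t (os.get ⟨t.val, h⟩).toB = 1) ∧
  (∀ t : Fin T, os.length ≤ t.val → θ.w t BSym.none = 1)


/-!
The encoding is read off the syntax tree: `wᵗ` is the `t`-th token of `PreForm(r)` (and `none`
after it), and `uᵖ_t = 1` exactly when the binary operator at position `p` has its second operand
starting at position `t`. In prefix notation the token after position `t` is the first operand of
an operator at `t`, the second operand of some earlier binary operator when `t` holds a symbol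
ending a subtree, or the end of the word after the last symbol; this gives the row and column
sums (3) and (5). Operands of distinct operators are nested or disjoint, so a second-operand edge
`(p, t)` is not crossed by an edge starting strictly between `p` and `t`, which is (6); and in a
SOIRE every symbol sits at one position, which is (7).
-/

open Finset

variable {α : Type}

def letterAt (os : List (Tok α)) (t : ℕ) : BSym α := (os[t]?.map Tok.toB).getD .none

lemma letterAt_of_getElem?_eq_some {os : List (Tok α)} {t : ℕ} {o : Tok α}
    (h : os[t]? = some o) : letterAt os t = o.toB := by
  simp [letterAt, h]

lemma letterAt_of_length_le {os : List (Tok α)} {t : ℕ} (h : os.length ≤ t) :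
    letterAt os t = .none := by
  simp [letterAt, List.getElem?_eq_none h]

lemma letterAt_eq_none_iff {os : List (Tok α)} {t : ℕ} :
    letterAt os t = .none ↔ os.length ≤ t := by
  cases ht : os[t]? with
  | none => simp [letterAt, List.getElem?_eq_none_iff.mp ht]
  | some o =>
    have := (List.getElem?_eq_some_iff.mp ht).1
    cases o <;> simp [letterAt, ht, Tok.toB] <;> omega

lemma Tok.toB_eq_sym_iff {o : Tok α} {a : α} : o.toB = .sym a ↔ o = .sym a := by
  cases o <;> simp [Tok.toB]

lemma letterAt_eq_sym_iff {os : List (Tok α)} {t : ℕ} {a : α} :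
    letterAt os t = .sym a ↔ os[t]? = some (.sym a) := by
  cases ht : os[t]? with
  | none => simp [letterAt, ht]
  | some o => simp [letterAt_of_getElem?_eq_some ht, Tok.toB_eq_sym_iff]

def Tok.symbol? : Tok α → Option α
  | .sym a => some a
  | _ => none

lemma List.eq_of_nodup_filterMap {β γ : Type} {l : List β} {f : β → Option γ}
    (hl : (l.filterMap f).Nodup) {i j : ℕ} {x y : β} {c : γ} (hi : l[i]? = some x)
    (hj : l[j]? = some y) (hx : f x = some c) (hy : f y = some c) : i = j := by
  induction l generalizing i j with
  | nil => simp at hi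
  | cons b l ih =>
    have not_mem : ∀ {k z}, l[k]? = some z → f z = some c → f b = some c → False :=
      fun hk hz hb => by
        rw [List.filterMap_cons_some hb, List.nodup_cons] at hl
        exact hl.1 (List.mem_filterMap.mpr ⟨_, List.mem_of_getElem? hk, hz⟩)
    rcases i with _ | i <;> rcases j with _ | j <;>
      simp only [List.getElem?_cons_zero, List.getElem?_cons_succ, Option.some.injEq] at hi hj
    · rfl
    · exact (not_mem hj hy (hi ▸ hx)).elim
    · exact (not_mem hi hx (hj ▸ hy)).elim
    · exact congrArg (· + 1) (ih (hl.sublist ((List.sublist_cons_self b l).filterMap f)) hi hj)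

/-- `E p t` says that the binary operator at position `p` of the prefix notation `os` has its
second operand starting at position `t`. -/
structure IsSecondOperandRel (os : List (Tok α)) (E : ℕ → ℕ → Prop) : Prop where
  add_two_le : ∀ {p t}, E p t → p + 2 ≤ t
  lt_length : ∀ {p t}, E p t → t < os.length
  biUnique : Relator.BiUnique E
  nested : ∀ {p t p' t'}, E p t → E p' t' → p < p' → p' < t → t' < t
  exists_iff_isBin : ∀ {p o}, os[p]? = some o → ((∃ t, E p t) ↔ o.isBin)
  isSym_iff : ∀ {t o}, os[t]? = some o →
    (o.isSym ↔ (∃ p, E p (t + 1)) ∨ t + 1 = os.length)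

namespace IsSecondOperandRel

open Classical

variable {os : List (Tok α)} {E : ℕ → ℕ → Prop} (h : IsSecondOperandRel os E) {T : ℕ}

noncomputable def encoding (T : ℕ) : Encoding α T where
  w t b := if b = letterAt os t then 1 else 0
  u p t := if E p t then 1 else 0
  w_mem _ _ := by split_ifs <;> simp
  u_mem _ _ := by split_ifs <;> simp
  u_zero p t hlt := if_neg fun hE => by have := h.add_two_le hE; omega

lemma encoding_w (t : Fin T) (b : BSym α) :
    (h.encoding T).w t b = if b = letterAt os t then 1 else 0 :=
  rfl

lemma sum_encoding_u_row (hT : os.length ≤ T) (p : Fin T) :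
    ∑ t, (h.encoding T).u p t = if ∃ t, E p t then 1 else 0 := by
  have hex : (∃ t : Fin T, E p t) ↔ ∃ t, E p t :=
    ⟨fun ⟨t, ht⟩ => ⟨t, ht⟩,
      fun ⟨t, ht⟩ => ⟨⟨t, (h.lt_length ht).trans_le hT⟩, ht⟩⟩
  exact (Fintype.sum_ite_eq_ite_exists _ (fun t t' ht ht' => Fin.ext (h.biUnique.2 ht ht')) 1).trans
    (by simp only [hex])

lemma sum_encoding_u_col (t : Fin T) :
    ∑ p, (h.encoding T).u p t = if ∃ p, E p t then 1 else 0 := by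
  have hex : (∃ p : Fin T, E p t) ↔ ∃ p, E p t :=
    ⟨fun ⟨p, hp⟩ => ⟨p, hp⟩,
      fun ⟨p, hp⟩ => ⟨⟨p, by have := h.add_two_le hp; omega⟩, hp⟩⟩
  exact (Fintype.sum_ite_eq_ite_exists _ (fun p p' hp hp' => Fin.ext (h.biUnique.1 hp hp')) 1).trans
    (by simp only [hex])

lemma oneHot_encoding_w (t : Fin T) : OneHotFn ((h.encoding T).w t) :=
  ⟨letterAt os t, by simp [encoding_w], fun _ hb => by simp [encoding_w, hb]⟩

lemma encoding_u_eq_zero_or_oneHot (hT : os.length ≤ T) (p : Fin T) :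
    (∀ t, (h.encoding T).u p t = 0) ∨ OneHotFn ((h.encoding T).u p) := by
  by_cases hp : ∃ t, E p t
  · obtain ⟨t, ht⟩ := hp
    refine Or.inr ⟨⟨t, (h.lt_length ht).trans_le hT⟩, if_pos ht, fun t' ht' => ?_⟩
    exact if_neg fun h' => ht' (Fin.ext (h.biUnique.2 h' ht))
  · exact Or.inl fun t => if_neg fun ht => hp ⟨t, ht⟩

lemma encoding_row_eq_one [Fintype α] (hT : os.length ≤ T) (p : Fin T) :
    (∑ t, (h.encoding T).u p t) + ((∑ a : α, (h.encoding T).w p (.sym a)) +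
      (h.encoding T).w p .opt + (h.encoding T).w p .star + (h.encoding T).w p .plus +
      (h.encoding T).w p .none) = 1 := by
  rw [sum_encoding_u_row h hT]
  simp only [encoding_w]
  cases hp : os[(p : ℕ)]? with
  | none =>
    have hlen : os.length ≤ p := List.getElem?_eq_none_iff.mp hp
    have : ¬∃ t, E p t := fun ⟨t, ht⟩ => by
      have := h.add_two_le ht; have := h.lt_length ht; omega
    simp [this, letterAt_of_length_le hlen]
  | some o =>
    rw [if_congr (h.exists_iff_isBin hp) rfl rfl, letterAt_of_getElem?_eq_some hp]
    cases o <;> simp [Tok.toB, Tok.isBin]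

lemma encoding_w_none_mono {t t' : Fin T} (htt' : (t : ℕ) + 1 = t') :
    (h.encoding T).w t .none ≤ (h.encoding T).w t' .none := by
  simp only [encoding_w, eq_comm (a := BSym.none), letterAt_eq_none_iff]
  split_ifs <;> first | omega | norm_num

lemma encoding_col_eq_one {t t' : Fin T} (htt' : (t : ℕ) + 1 = t') :
    ((h.encoding T).w t .opt + (h.encoding T).w t .plus + (h.encoding T).w t .star +
      (h.encoding T).w t .cat + (h.encoding T).w t .inter + (h.encoding T).w t .alt) +
      (∑ p, (h.encoding T).u p t') + (h.encoding T).w t' .none = 1 := by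
  rw [sum_encoding_u_col h]
  simp only [encoding_w, eq_comm (a := BSym.none), letterAt_eq_none_iff]
  have hE : (∃ p, E p t') → (t' : ℕ) < os.length := fun ⟨p, hp⟩ => h.lt_length hp
  cases ht : os[(t : ℕ)]? with
  | none =>
    have hlen : os.length ≤ t := List.getElem?_eq_none_iff.mp ht
    have : ¬∃ p, E p t' := fun hp => by have := hE hp; omega
    simp [this, letterAt_of_length_le hlen]; omega
  | some o =>
    have hsym := h.isSym_iff ht
    rw [htt'] at hsym
    rw [letterAt_of_getElem?_eq_some ht]
    have hlen : (t : ℕ) < os.length := (List.getElem?_eq_some_iff.mp ht).1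
    by_cases ht' : (t' : ℕ) < os.length
    · have : (∃ p, E p t') ↔ o.isSym := by rw [hsym, or_iff_left (by omega)]
      rw [if_congr this rfl rfl]
      cases o <;> simp [Tok.toB, Tok.isSym, ht']
    · have : ¬∃ p, E p t' := fun hp => ht' (hE hp)
      have ho : o.isSym := hsym.mpr (Or.inr (by omega))
      cases o <;> simp_all [Tok.toB, Tok.isSym]

lemma sum_encoding_u_row_le_one (hT : os.length ≤ T) (p : Fin T) :
    ∑ t, (h.encoding T).u p t ≤ 1 := by
  rw [sum_encoding_u_row h hT]
  split_ifs <;> norm_num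

lemma encoding_nested_le (hT : os.length ≤ T) {t p : Fin T}
    (hpt : (p : ℕ) + 2 ≤ t) :
    ((t : ℝ) - p - 1) * (h.encoding T).u p t +
      ∑ p' ∈ univ.filter (fun p' : Fin T => (p : ℕ) < p' ∧ (p' : ℕ) < t),
        ∑ t' ∈ univ.filter (fun t' : Fin T => (t : ℕ) < t'), (h.encoding T).u p' t'
      ≤ (t : ℝ) - p - 1 := by
  have hfilter : univ.filter (fun p' : Fin T => (p : ℕ) < p' ∧ (p' : ℕ) < t) = Ioo p t := by
    ext; simp only [mem_filter, mem_univ, true_and, mem_Ioo, Fin.lt_def]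
  rw [hfilter]
  by_cases hE : E p t
  · have hinner : ∀ p' ∈ Ioo p t,
        ∑ t' ∈ univ.filter (fun t' : Fin T => (t : ℕ) < t'), (h.encoding T).u p' t' = 0 := by
      refine fun p' hp' => sum_eq_zero fun t' ht' => if_neg fun hE' => ?_
      simp only [mem_Ioo, Fin.lt_def, mem_filter, mem_univ, true_and] at hp' ht'
      exact absurd (h.nested hE hE' hp'.1 hp'.2) (by omega)
    rw [sum_eq_zero hinner, show (h.encoding T).u p t = 1 from if_pos hE]
    simp
  · have hu : (h.encoding T).u p t = 0 := if_neg hE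
    calc ((t : ℝ) - p - 1) * (h.encoding T).u p t + ∑ p' ∈ Ioo p t,
          ∑ t' ∈ univ.filter (fun t' : Fin T => (t : ℕ) < t'), (h.encoding T).u p' t'
        ≤ ∑ _p' ∈ Ioo p t, (1 : ℝ) := by
          rw [hu, mul_zero, zero_add]
          refine sum_le_sum fun p' _ => le_trans ?_ (sum_encoding_u_row_le_one h hT p')
          exact sum_le_sum_of_subset_of_nonneg (filter_subset _ _)
            fun _ _ _ => ((h.encoding T).u_mem _ _).1
      _ = (t : ℝ) - p - 1 := by
          rw [sum_const, Fin.card_Ioo, nsmul_one, Nat.cast_sub (by omega), Nat.cast_sub (by omega)]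
          simp

lemma sum_encoding_w_sym_le_one (hsym : (os.filterMap Tok.symbol?).Nodup) (a : α) :
    ∑ t, (h.encoding T).w t (.sym a) ≤ 1 := by
  simp only [encoding_w, eq_comm (a := BSym.sym a), letterAt_eq_sym_iff]
  rw [Fintype.sum_ite_eq_ite_exists _
    (fun t t' ht ht' => Fin.ext (List.eq_of_nodup_filterMap hsym ht ht' rfl rfl))]
  split_ifs <;> norm_num

theorem faithful_encoding [Fintype α] (hT : os.length ≤ T)
    (hsym : (os.filterMap Tok.symbol?).Nodup) : Faithful (h.encoding T) :=
  ⟨oneHot_encoding_w h, encoding_u_eq_zero_or_oneHot h hT, encoding_row_eq_one h hT,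
    fun _ _ => encoding_w_none_mono h, fun _ _ => encoding_col_eq_one h,
    fun _ _ => encoding_nested_le h hT, sum_encoding_w_sym_le_one h hsym⟩

theorem decodesTo_encoding (hT : os.length ≤ T) :
    DecodesTo (h.encoding T) os :=
  ⟨hT, fun t ht => by
      simp [encoding_w, letterAt_of_getElem?_eq_some (List.getElem?_eq_getElem ht)],
    fun t ht => by simp [encoding_w, letterAt_of_length_le ht]⟩

end IsSecondOperandRel

namespace RE

@[simp] lemma size_sym (a : α) : (sym a).size = 1 := rfl
@[simp] lemma size_opt (r : RE α) : (opt r).size = r.size + 1 := by simp [size, preForm]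
@[simp] lemma size_star (r : RE α) : (star r).size = r.size + 1 := by simp [size, preForm]
@[simp] lemma size_plus (r : RE α) : (plus r).size = r.size + 1 := by simp [size, preForm]
@[simp] lemma size_cat (r₁ r₂ : RE α) : (cat r₁ r₂).size = r₁.size + r₂.size + 1 := by
  simp [size, preForm]
@[simp] lemma size_inter (r₁ r₂ : RE α) :
    (inter r₁ r₂).size = r₁.size + r₂.size + 1 := by
  simp [size, preForm]
@[simp] lemma size_alt (r₁ r₂ : RE α) : (alt r₁ r₂).size = r₁.size + r₂.size + 1 := by
  simp [size, preForm]

lemma size_pos (r : RE α) : 0 < r.size := by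
  induction r <;> simp

/-- The pairs `(p, t)` such that the binary operator at position `p` of `PreForm(r)` has its
second operand starting at position `t`, with positions shifted by `o`. -/
def secondOperandEdges : RE α → ℕ → List (ℕ × ℕ)
  | sym _, _ => []
  | opt r, o | star r, o | plus r, o => r.secondOperandEdges (o + 1)
  | cat r₁ r₂, o | inter r₁ r₂, o | alt r₁ r₂, o =>
    (o, o + 1 + r₁.size) ::
      (r₁.secondOperandEdges (o + 1) ++ r₂.secondOperandEdges (o + 1 + r₁.size))

lemma bounds_of_mem_secondOperandEdges {r : RE α} {o p t : ℕ}
    (h : (p, t) ∈ r.secondOperandEdges o) :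
    o ≤ p ∧ p + 2 ≤ t ∧ t < o + r.size := by
  induction r generalizing o with
  | sym => simp [secondOperandEdges] at h
  | opt r ih | star r ih | plus r ih =>
    have := ih h
    simp only [size_opt, size_star, size_plus]
    omega
  | cat r₁ r₂ ih₁ ih₂ | inter r₁ r₂ ih₁ ih₂ | alt r₁ r₂ ih₁ ih₂ =>
    have := size_pos r₁; have := size_pos r₂
    simp only [secondOperandEdges, List.mem_cons, List.mem_append, Prod.mk.injEq] at h
    simp only [size_cat, size_inter, size_alt]
    rcases h with ⟨rfl, rfl⟩ | h | h
    · omega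
    · have := ih₁ h; omega
    · have := ih₂ h; omega

/-- The operands of a binary operator occupy disjoint intervals of positions. -/
lemma secondOperandEdges_noncrossing {r : RE α} {o p t p' t' : ℕ}
    (h : (p, t) ∈ r.secondOperandEdges o) (h' : (p', t') ∈ r.secondOperandEdges o) :
    (p = p' ↔ t = t') ∧ (p < p' → p' < t → t' < t) := by
  induction r generalizing o with
  | sym => simp [secondOperandEdges] at h
  | opt r ih | star r ih | plus r ih => exact ih h h'
  | cat r₁ r₂ ih₁ ih₂ | inter r₁ r₂ ih₁ ih₂ | alt r₁ r₂ ih₁ ih₂ =>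
    simp only [secondOperandEdges, List.mem_cons, List.mem_append, Prod.mk.injEq] at h h'
    rcases h with ⟨rfl, rfl⟩ | h | h <;> rcases h' with ⟨rfl, rfl⟩ | h' | h'
    all_goals first
      | exact ih₁ h h'
      | exact ih₂ h h'
      | (try have := bounds_of_mem_secondOperandEdges h)
        (try have := bounds_of_mem_secondOperandEdges h')
        omega

lemma exists_mem_secondOperandEdges_iff {r : RE α} {o k : ℕ} {x : Tok α}
    (hx : r.preForm[k]? = some x) : (∃ t, (o + k, t) ∈ r.secondOperandEdges o) ↔ x.isBin := by
  induction r generalizing o k with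
  | sym =>
    rcases k with _ | k
    · obtain rfl := Option.some.inj hx
      simp [secondOperandEdges, Tok.isBin]
    · simp [preForm] at hx
  | opt r ih | star r ih | plus r ih =>
    rcases k with _ | k
    · obtain rfl := Option.some.inj hx
      simp only [secondOperandEdges, Tok.isBin, Bool.false_eq_true, iff_false, not_exists]
      exact fun t ht => by have := bounds_of_mem_secondOperandEdges ht; omega
    · simp only [preForm, List.getElem?_cons_succ] at hx
      rw [secondOperandEdges, show o + (k + 1) = o + 1 + k by omega, ih hx]
  | cat r₁ r₂ ih₁ ih₂ | inter r₁ r₂ ih₁ ih₂ | alt r₁ r₂ ih₁ ih₂ =>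
    rcases k with _ | k
    · obtain rfl := Option.some.inj hx
      simp [secondOperandEdges, Tok.isBin]
    simp only [preForm, List.getElem?_cons_succ] at hx
    rcases lt_or_ge k r₁.size with hk | hk
    · rw [List.getElem?_append_left hk] at hx
      have h₂ : ∀ t, (o + 1 + k, t) ∉ r₂.secondOperandEdges (o + 1 + r₁.size) :=
        fun t ht => by have := bounds_of_mem_secondOperandEdges ht; omega
      rw [show o + (k + 1) = o + 1 + k by omega, ← ih₁ (o := o + 1) hx]
      simp [secondOperandEdges, h₂, show o + 1 + k ≠ o by omega]
    · obtain ⟨j, rfl⟩ := Nat.exists_eq_add_of_le hk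
      rw [List.getElem?_append_right (Nat.le_add_right r₁.size j),
        show r₁.size + j - r₁.preForm.length = j from Nat.add_sub_cancel_left _ _] at hx
      have h₁ : ∀ t, (o + 1 + r₁.size + j, t) ∉ r₁.secondOperandEdges (o + 1) :=
        fun t ht => by have := bounds_of_mem_secondOperandEdges ht; omega
      rw [show o + (r₁.size + j + 1) = o + 1 + r₁.size + j by omega,
        ← ih₂ (o := o + 1 + r₁.size) hx]
      simp [secondOperandEdges, h₁, show o + 1 + r₁.size + j ≠ o by omega]

lemma isSym_iff_exists_mem_secondOperandEdges {r : RE α} {o k : ℕ} {x : Tok α}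
    (hx : r.preForm[k]? = some x) :
    x.isSym ↔ (∃ p, (p, o + k + 1) ∈ r.secondOperandEdges o) ∨ k + 1 = r.size := by
  induction r generalizing o k with
  | sym =>
    rcases k with _ | k
    · obtain rfl := Option.some.inj hx
      simp [Tok.isSym]
    · simp [preForm] at hx
  | opt r ih | star r ih | plus r ih =>
    rcases k with _ | k
    · obtain rfl := Option.some.inj hx
      have := size_pos r
      have : ∀ p, (p, o + 0 + 1) ∉ r.secondOperandEdges (o + 1) := fun p hp => by
        have := bounds_of_mem_secondOperandEdges hp; omega
      simp [Tok.isSym, secondOperandEdges, this]; omega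
    · simp only [preForm, List.getElem?_cons_succ] at hx
      rw [secondOperandEdges, show o + (k + 1) + 1 = o + 1 + k + 1 by omega, ih (o := o + 1) hx]
      simp
  | cat r₁ r₂ ih₁ ih₂ | inter r₁ r₂ ih₁ ih₂ | alt r₁ r₂ ih₁ ih₂ =>
    have := size_pos r₁; have := size_pos r₂
    rcases k with _ | k
    · obtain rfl := Option.some.inj hx
      have h₁ : ∀ p, (p, o + 0 + 1) ∉ r₁.secondOperandEdges (o + 1) := fun p hp => by
        have := bounds_of_mem_secondOperandEdges hp; omega
      have h₂ : ∀ p, (p, o + 0 + 1) ∉ r₂.secondOperandEdges (o + 1 + r₁.size) :=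
        fun p hp => by have := bounds_of_mem_secondOperandEdges hp; omega
      simp [Tok.isSym, secondOperandEdges, h₁, h₂]; omega
    simp only [preForm, List.getElem?_cons_succ] at hx
    rcases lt_or_ge k r₁.size with hk | hk
    · rw [List.getElem?_append_left hk] at hx
      have h₂ : ∀ p, (p, o + 1 + k + 1) ∉ r₂.secondOperandEdges (o + 1 + r₁.size) :=
        fun p hp => by have := bounds_of_mem_secondOperandEdges hp; omega
      rw [ih₁ (o := o + 1) hx, show o + (k + 1) + 1 = o + 1 + k + 1 by omega]
      simp only [secondOperandEdges, List.mem_cons, List.mem_append, Prod.mk.injEq, exists_or,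
        exists_eq_left, h₂, or_false, size_cat, size_inter, size_alt,
        show o + 1 + k + 1 = o + 1 + r₁.size ↔ k + 1 = r₁.size by omega,
        show k + 1 + 1 ≠ r₁.size + r₂.size + 1 by omega]
      tauto
    · obtain ⟨j, rfl⟩ := Nat.exists_eq_add_of_le hk
      rw [List.getElem?_append_right (Nat.le_add_right r₁.size j),
        show r₁.size + j - r₁.preForm.length = j from Nat.add_sub_cancel_left _ _] at hx
      have h₁ : ∀ p, (p, o + 1 + r₁.size + j + 1) ∉ r₁.secondOperandEdges (o + 1) :=
        fun p hp => by have := bounds_of_mem_secondOperandEdges hp; omega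
      rw [ih₂ (o := o + 1 + r₁.size) hx,
        show o + (r₁.size + j + 1) + 1 = o + 1 + r₁.size + j + 1 by omega]
      simp only [secondOperandEdges, List.mem_cons, List.mem_append, Prod.mk.injEq, exists_or,
        exists_eq_left, h₁, false_or, size_cat, size_inter, size_alt,
        show o + 1 + r₁.size + j + 1 ≠ o + 1 + r₁.size by omega,
        show r₁.size + j + 1 + 1 = r₁.size + r₂.size + 1 ↔ j + 1 = r₂.size by omega]

theorem isSecondOperandRel_secondOperandEdges (r : RE α) :
    IsSecondOperandRel r.preForm (fun p t => (p, t) ∈ r.secondOperandEdges 0) where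
  add_two_le h := (bounds_of_mem_secondOperandEdges h).2.1
  lt_length h := by simpa [size] using (bounds_of_mem_secondOperandEdges h).2.2
  biUnique := ⟨fun _ _ _ h h' => (secondOperandEdges_noncrossing h h').1.mpr rfl,
    fun _ _ _ h h' => (secondOperandEdges_noncrossing h h').1.mp rfl⟩
  nested h h' := (secondOperandEdges_noncrossing h h').2
  exists_iff_isBin hx := by simpa using exists_mem_secondOperandEdges_iff (o := 0) hx
  isSym_iff hx := by simpa [size] using isSym_iff_exists_mem_secondOperandEdges (o := 0) hx

lemma filterMap_symbol?_preForm (r : RE α) : r.preForm.filterMap Tok.symbol? = r.symList := by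
  induction r <;> simp_all [preForm, symList, List.filterMap_cons, Tok.symbol?]

end RE

theorem soire_has_faithful_encoding_general {α : Type} [Fintype α] {T : ℕ}
    (r : RE α) (hr : SOIRE r) (hsize : r.size ≤ T) :
    ∃ θ : Encoding α T, Faithful θ ∧ DecodesTo θ r.preForm :=
  have h := r.isSecondOperandRel_secondOperandEdges
  ⟨h.encoding T, h.faithful_encoding hsize (r.filterMap_symbol?_preForm ▸ hr),
    h.decodesTo_encoding hsize⟩

/-- Proposition 2: every SOIRE of size at most `T` arises from some
faithful encoding with length `T`. -/
theorem soire_has_faithful_encoding {α : Type} [Fintype α] [DecidableEq α] {T : ℕ}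
    (hT : 0 < T) (r : RE α) (hr : SOIRE r) (hsize : r.size ≤ T) :
    ∃ θ : Encoding α T, Faithful θ ∧ DecodesTo θ r.preForm :=
  soire_has_faithful_encoding_general r hr hsize
end

section
/- Let T ∈ ℤ⁺ and let θ₁ and θ₂ be two faithful encodings with length T over a finite alphabet Σ. If θ₁ ≠ θ₂, then Enc2Pre(θ₁) ≠ Enc2Pre(θ₂). -/
section Aux

variable {α : Type} [Fintype α] {T : ℕ}

private lemma onehot_eq {β : Type} {f : β → ℝ} (hf : OneHotFn f) {b : β} (hb : f b = 1) :
    ∀ b', b' ≠ b → f b' = 0 := by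
  obtain ⟨c, hc1, hc0⟩ := hf
  have hbc : b = c := by
    by_contra h
    rw [hc0 b h] at hb; norm_num at hb
  subst hbc
  exact hc0

private lemma w_eq_of_decodes {θ₁ θ₂ : Encoding α T} (h₁ : Faithful θ₁) (h₂ : Faithful θ₂)
    {os : List (Tok α)} (d₁ : DecodesTo θ₁ os) (d₂ : DecodesTo θ₂ os) :
    θ₁.w = θ₂.w := by
  funext t b
  by_cases h : t.val < os.length
  · have e1 := d₁.2.1 t h
    have e2 := d₂.2.1 t h
    by_cases hb : b = (os.get ⟨t.val, h⟩).toB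
    · rw [hb, e1, e2]
    · rw [onehot_eq (h₁.1 t) e1 b hb, onehot_eq (h₂.1 t) e2 b hb]
  · push_neg at h
    have e1 := d₁.2.2 t h; have e2 := d₂.2.2 t h
    by_cases hb : b = BSym.none
    · rw [hb, e1, e2]
    · rw [onehot_eq (h₁.1 t) e1 b hb, onehot_eq (h₂.1 t) e2 b hb]

private lemma u_mem01 {θ : Encoding α T} (h : Faithful θ) (p t : Fin T) :
    θ.u p t = 0 ∨ θ.u p t = 1 := by
  rcases h.2.1 p with hz | ⟨b, hb1, hb0⟩
  · exact Or.inl (hz t)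
  · by_cases ht : t = b
    · right; rw [ht]; exact hb1
    · exact Or.inl (hb0 t ht)

private lemma two_le {θ : Encoding α T} {p t : Fin T} (h : θ.u p t = 1) :
    p.val + 2 ≤ t.val := by
  by_contra hc; push_neg at hc
  rw [θ.u_zero p t hc] at h; norm_num at h

private lemma exists_one {n : ℕ} {g : Fin n → ℝ} (hg : ∀ i, g i = 0 ∨ g i = 1)
    (hs : (∑ i, g i) = 1) : ∃ i, g i = 1 := by
  by_contra hc; push_neg at hc
  have hz : ∀ i, g i = 0 := fun i => (hg i).resolve_right (hc i)
  rw [Finset.sum_congr rfl (fun i _ => hz i)] at hs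
  simp at hs

private lemma pair_contra {n : ℕ} {g : Fin n → ℝ} (hg : ∀ i, 0 ≤ g i) {i j : Fin n}
    (hij : i ≠ j) (hi : g i = 1) (hj : g j = 1) (hs : (∑ k, g k) = 1) : False := by
  have hp : ∑ k ∈ ({i, j} : Finset (Fin n)), g k = 2 := by
    rw [Finset.sum_pair hij, hi, hj]; norm_num
  have h2 : (2:ℝ) ≤ ∑ k, g k := by
    calc (2:ℝ) = ∑ k ∈ ({i, j} : Finset (Fin n)), g k := hp.symm
    _ ≤ _ := Finset.sum_le_sum_of_subset_of_nonneg (Finset.subset_univ _)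
        (fun k _ _ => hg k)
  linarith

/-- If `θ.u p t = 1` then the `p`-th row sums to 1 in both encodings. -/
private lemma row_sums {θ θ' : Encoding α T} (h : Faithful θ) (h' : Faithful θ')
    (hw : θ.w = θ'.w) {p t : Fin T} (hpt : θ.u p t = 1) :
    (∑ s, θ.u p s) = 1 ∧ (∑ s, θ'.u p s) = 1 := by
  have h3 := h.2.2.1 p
  have h3' := h'.2.2.1 p
  rw [← hw] at h3'
  have hge : (1:ℝ) ≤ ∑ s, θ.u p s := by
    calc (1:ℝ) = θ.u p t := hpt.symm
    _ ≤ _ := Finset.single_le_sum (fun i _ => (θ.u_mem p i).1) (Finset.mem_univ t)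
  have hs : (0:ℝ) ≤ ∑ a : α, θ.w p (BSym.sym a) :=
    Finset.sum_nonneg (fun a _ => (θ.w_mem p (BSym.sym a)).1)
  have n1 := (θ.w_mem p BSym.opt).1
  have n2 := (θ.w_mem p BSym.star).1
  have n3 := (θ.w_mem p BSym.plus).1
  have n4 := (θ.w_mem p BSym.none).1
  constructor
  · linarith
  · linarith

/-- If `θ.u p t = 1` then the `t`-th column sums to 1 in both encodings. -/
private lemma col_sums {θ θ' : Encoding α T} (h : Faithful θ) (h' : Faithful θ')
    (hw : θ.w = θ'.w) {p t : Fin T} (hpt : θ.u p t = 1) :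
    (∑ q, θ.u q t) = 1 ∧ (∑ q, θ'.u q t) = 1 := by
  have hp2 : p.val + 2 ≤ t.val := two_le hpt
  have htT : t.val < T := t.isLt
  set tp : Fin T := ⟨t.val - 1, by omega⟩ with htp
  have hstep : tp.val + 1 = t.val := by simp [htp]; omega
  have h5 := h.2.2.2.2.1 tp t hstep
  have h5' := h'.2.2.2.2.1 tp t hstep
  rw [← hw] at h5'
  have hge : (1:ℝ) ≤ ∑ q, θ.u q t := by
    calc (1:ℝ) = θ.u p t := hpt.symm
    _ ≤ _ := Finset.single_le_sum (fun i _ => (θ.u_mem i t).1) (Finset.mem_univ p)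
  have n1 := (θ.w_mem tp BSym.opt).1
  have n2 := (θ.w_mem tp BSym.plus).1
  have n3 := (θ.w_mem tp BSym.star).1
  have n4 := (θ.w_mem tp BSym.cat).1
  have n5 := (θ.w_mem tp BSym.inter).1
  have n6 := (θ.w_mem tp BSym.alt).1
  have n7 := (θ.w_mem t BSym.none).1
  constructor
  · linarith
  · linarith

/-- Condition (6): no crossing edges. -/
private lemma no_cross {θ : Encoding α T} (h : Faithful θ) {q t p t' : Fin T}
    (h1 : θ.u q t = 1) (h2 : θ.u p t' = 1) (hqp : q.val < p.val) (hpt : p.val < t.val)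
    (htt : t.val < t'.val) : False := by
  have hq2 : q.val + 2 ≤ t.val := two_le h1
  have h6 := h.2.2.2.2.2.1 t q hq2
  rw [h1, mul_one] at h6
  have hpmem : p ∈ Finset.univ.filter (fun p' : Fin T => q.val < p'.val ∧ p'.val < t.val) :=
    Finset.mem_filter.mpr ⟨Finset.mem_univ p, hqp, hpt⟩
  have ht'mem : t' ∈ Finset.univ.filter (fun t'' : Fin T => t.val < t''.val) :=
    Finset.mem_filter.mpr ⟨Finset.mem_univ t', htt⟩
  have hinner : (1:ℝ) ≤ ∑ t'' ∈ Finset.univ.filter (fun t'' : Fin T => t.val < t''.val),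
      θ.u p t'' := by
    calc (1:ℝ) = θ.u p t' := h2.symm
    _ ≤ _ := Finset.single_le_sum (fun i _ => (θ.u_mem p i).1) ht'mem
  have houter : (1:ℝ) ≤
      ∑ p' ∈ Finset.univ.filter (fun p' : Fin T => q.val < p'.val ∧ p'.val < t.val),
        ∑ t'' ∈ Finset.univ.filter (fun t'' : Fin T => t.val < t''.val), θ.u p' t'' := by
    calc (1:ℝ) ≤ _ := hinner
    _ ≤ _ := Finset.single_le_sum
        (fun i _ => Finset.sum_nonneg (fun j _ => (θ.u_mem i j).1)) hpmem
  linarith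

/-- Key step: a span-minimal discrepancy between two faithful encodings with the
same `w` yields a contradiction. -/
private lemma key {θ θ' : Encoding α T} (h : Faithful θ) (h' : Faithful θ')
    (hw : θ.w = θ'.w) {p t : Fin T} (h1 : θ.u p t = 1) (h0 : θ'.u p t = 0)
    (hmin : ∀ q s : Fin T,
      ((θ.u q s = 1 ∧ θ'.u q s = 0) ∨ (θ'.u q s = 1 ∧ θ.u q s = 0)) →
      t.val - p.val ≤ s.val - q.val) : False := by
  have hp2 : p.val + 2 ≤ t.val := two_le h1
  obtain ⟨rs, rs'⟩ := row_sums h h' hw h1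
  obtain ⟨t', ht'⟩ := exists_one (fun s => u_mem01 h' p s) rs'
  have htne : t' ≠ t := by
    intro e; rw [e, h0] at ht'; norm_num at ht'
  have h1t' : θ.u p t' = 0 := by
    rcases u_mem01 h p t' with e | e
    · exact e
    · exact absurd rs (by intro hh; exact pair_contra (fun i => (θ.u_mem p i).1) htne e h1 hh)
  have hmin1 := hmin p t' (Or.inr ⟨ht', h1t'⟩)
  have hp2' : p.val + 2 ≤ t'.val := two_le ht'
  have htvne : t'.val ≠ t.val := fun e => htne (Fin.ext e)
  have htt' : t.val < t'.val := by omega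
  obtain ⟨cs, cs'⟩ := col_sums h h' hw h1
  obtain ⟨q, hq⟩ := exists_one (fun i => u_mem01 h' i t) cs'
  have hqne : q ≠ p := by
    intro e; rw [e, h0] at hq; norm_num at hq
  have hqt0 : θ.u q t = 0 := by
    rcases u_mem01 h q t with e | e
    · exact e
    · exact absurd cs (by intro hh; exact pair_contra (fun i => (θ.u_mem i t).1) hqne e h1 hh)
  have hminq := hmin q t (Or.inr ⟨hq, hqt0⟩)
  have hq2 : q.val + 2 ≤ t.val := two_le hq
  have hqvne : q.val ≠ p.val := fun e => hqne (Fin.ext e)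
  have hqp : q.val < p.val := by omega
  exact no_cross h' hq ht' hqp (by omega) htt'

private lemma Encoding.ext' {θ θ' : Encoding α T} (hw : θ.w = θ'.w) (hu : θ.u = θ'.u) :
    θ = θ' := by
  cases θ; cases θ'; simp_all

end Aux

/-- Proposition 3: distinct faithful encodings decode to distinct
sequences. -/
theorem faithful_encoding_injective {α : Type} [Fintype α] [DecidableEq α] {T : ℕ}
    (hT : 0 < T) (θ₁ θ₂ : Encoding α T) (h₁ : Faithful θ₁) (h₂ : Faithful θ₂)
    (hne : θ₁ ≠ θ₂) :
    ∀ os : List (Tok α), DecodesTo θ₁ os → ¬ DecodesTo θ₂ os := by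
  intro os d₁ d₂
  apply hne
  have hw : θ₁.w = θ₂.w := w_eq_of_decodes h₁ h₂ d₁ d₂
  have hu : θ₁.u = θ₂.u := by
    by_contra hune
    classical
    have hex : ∃ x : Fin T × Fin T,
        (θ₁.u x.1 x.2 = 1 ∧ θ₂.u x.1 x.2 = 0) ∨
        (θ₂.u x.1 x.2 = 1 ∧ θ₁.u x.1 x.2 = 0) := by
      by_contra hc; push_neg at hc
      apply hune
      funext p t
      rcases u_mem01 h₁ p t with e1 | e1 <;> rcases u_mem01 h₂ p t with e2 | e2
      · rw [e1, e2]
      · exact absurd e1 ((hc ⟨p, t⟩).2 e2)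
      · exact absurd e2 ((hc ⟨p, t⟩).1 e1)
      · rw [e1, e2]
    obtain ⟨x, hx⟩ := hex
    set S : Finset (Fin T × Fin T) := Finset.univ.filter (fun y =>
      (θ₁.u y.1 y.2 = 1 ∧ θ₂.u y.1 y.2 = 0) ∨
      (θ₂.u y.1 y.2 = 1 ∧ θ₁.u y.1 y.2 = 0)) with hS
    have hSne : S.Nonempty := ⟨x, Finset.mem_filter.mpr ⟨Finset.mem_univ x, hx⟩⟩
    obtain ⟨m, hmS, hmmin⟩ := S.exists_min_image (fun y => y.2.val - y.1.val) hSne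
    have hmP := (Finset.mem_filter.mp hmS).2
    have hmin' : ∀ q s : Fin T,
        ((θ₁.u q s = 1 ∧ θ₂.u q s = 0) ∨ (θ₂.u q s = 1 ∧ θ₁.u q s = 0)) →
        m.2.val - m.1.val ≤ s.val - q.val := by
      intro q s hqs
      exact hmmin ⟨q, s⟩ (Finset.mem_filter.mpr ⟨Finset.mem_univ _, hqs⟩)
    rcases hmP with ⟨e1, e0⟩ | ⟨e1, e0⟩
    · exact key h₁ h₂ hw e1 e0 hmin'
    · exact key h₂ h₁ hw.symm e1 e0 (fun q s hqs => hmin' q s hqs.symm)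
  exact Encoding.ext' hw hu
end
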